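/- Let R be a commutative unital ring and p : (M,F) → (N,F) a morphism of filtered cochain complexes of R-modules. Then p has the right lifting property with respect to the filtered map S_R(n+1,p) → D_R(n,p) for every n ∈ ℤ and p ∈ ℕ if and only if for every k ∈ ℕ the restriction F^k p : F^kM → F^kN is degreewise surjective and a quasi-isomorphism (equivalently, degreewise surjective with acyclic kernel). -/

import Mathlib

open CategoryTheory Limits ZeroObject

noncomputable section

variable (R : Type) [CommRing R]

/-- The category of unbounded cochain complexes of `R`-modules. -/
abbrev Cx := CochainComplex (ModuleCat.{0} R) ℤ



/-- The underlying module of `D_R(n)` in degree `i`: it is (isomorphic to) `R` if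
`i = n` or `i = n+1`, and the zero module otherwise. -/
abbrev diskFun (n i : ℤ) : Type := PLift (i = n ∨ i = n + 1) → R

/-- The differential of the disk complex `D_R(n)`. -/
def diskD (n i j : ℤ) : (diskFun R n i) →ₗ[R] (diskFun R n j) where
  toFun f _ := if hij : i = n ∧ j = n + 1 then f ⟨Or.inl hij.1⟩ else 0
  map_add' f g := by
    funext h
    by_cases hij : i = n ∧ j = n + 1 <;> simp [hij]
  map_smul' r f := by
    funext h
    by_cases hij : i = n ∧ j = n + 1 <;> simp [hij]

lemma diskD_apply (n i j : ℤ) (f : diskFun R n i) (h : PLift (j = n ∨ j = n + 1)) :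
    diskD R n i j f h = if hij : i = n ∧ j = n + 1 then f ⟨Or.inl hij.1⟩ else 0 := rfl

/-- The disk complex `D_R(n)`, with `R` in degrees `n` and `n+1`, the identity as the only
non-trivial differential, and `0` elsewhere. -/
def disk (n : ℤ) : Cx R where
  X i := ModuleCat.of R (diskFun R n i)
  d i j := ModuleCat.ofHom (diskD R n i j)
  shape i j hij := by
    apply ModuleCat.hom_ext
    apply LinearMap.ext
    intro f
    funext h
    have hn : ¬ (i = n ∧ j = n + 1) := by
      rintro ⟨rfl, rfl⟩
      exact hij rfl
    show diskD R n i j f h = _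
    rw [diskD_apply, dif_neg hn]
    rfl
  d_comp_d' i j k _ _ := by
    apply ModuleCat.hom_ext
    apply LinearMap.ext
    intro f
    funext h
    show diskD R n j k (diskD R n i j f) h = _
    rw [diskD_apply]
    split_ifs with hjk
    · rw [diskD_apply]
      have hn : ¬ (i = n ∧ j = n + 1) := by
        obtain ⟨h1, h2⟩ := hjk
        rintro ⟨rfl, h3⟩
        omega
      rw [dif_neg hn]
      rfl
    · rfl

/-- The underlying module of `S_R(n)` in degree `i`. -/
abbrev sphereFun (n i : ℤ) : Type := PLift (i = n) → R

/-- The sphere complex `S_R(n)`, with `R` in degree `n` and `0` elsewhere. -/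
def sphere (n : ℤ) : Cx R where
  X i := ModuleCat.of R (sphereFun R n i)
  d _ _ := 0
  shape _ _ _ := rfl
  d_comp_d' := by intros; simp

/-- The degreewise component of the map `S_R(n+1) ⟶ D_R(n)`. -/
def sphereToDiskHom (n i : ℤ) : (sphereFun R (n + 1) i) →ₗ[R] (diskFun R n i) where
  toFun g _ := if hi : i = n + 1 then g ⟨hi⟩ else 0
  map_add' g₁ g₂ := by
    funext h
    by_cases hi : i = n + 1 <;> simp [hi]
  map_smul' r g := by
    funext h
    by_cases hi : i = n + 1 <;> simp [hi]

lemma sphereToDiskHom_apply (n i : ℤ) (g : sphereFun R (n + 1) i)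
    (h : PLift (i = n ∨ i = n + 1)) :
    sphereToDiskHom R n i g h = if hi : i = n + 1 then g ⟨hi⟩ else 0 := rfl

/-- The map `S_R(n+1) ⟶ D_R(n)` which is the identity of `R` in degree `n+1`. -/
def sphereToDisk (n : ℤ) : sphere R (n + 1) ⟶ disk R n where
  f i := ModuleCat.ofHom (sphereToDiskHom R n i)
  comm' i j _ := by
    apply ModuleCat.hom_ext
    apply LinearMap.ext
    intro g
    funext h
    show diskD R n i j (sphereToDiskHom R n i g) h = sphereToDiskHom R n j ((0 : _ →ₗ[R] _) g) h
    simp only [LinearMap.zero_apply, map_zero, Pi.zero_apply]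
    rw [diskD_apply]
    split_ifs with hij
    · change (if hi : i = n + 1 then (g : sphereFun R (n + 1) i) ⟨hi⟩ else 0) = 0
      have hn : ¬ i = n + 1 := by
        obtain ⟨h1, h2⟩ := hij
        omega
      rw [dif_neg hn]
    · rfl

/-- A map of cochain complexes is degreewise surjective if it is surjective in each degree. -/
def DegSurj {M N : Cx R} (p : M ⟶ N) : Prop := ∀ n : ℤ, Function.Surjective (p.f n)


/-- A filtered cochain complex of `R`-modules: a cochain complex `C` together with a
decreasing `ℕ`-indexed filtration by subcomplexes `C = F⁰C ⊇ F¹C ⊇ F²C ⊇ ⋯`. -/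
structure FCx where
  /-- the underlying cochain complex -/
  C : Cx R
  /-- the filtration, given degreewise by submodules -/
  F : ℕ → ∀ i : ℤ, Submodule R (C.X i)
  /-- the filtration is decreasing -/
  antitone : ∀ p q : ℕ, p ≤ q → ∀ i : ℤ, F q i ≤ F p i
  /-- `F⁰C = C` -/
  zero_top : ∀ i : ℤ, F 0 i = ⊤
  /-- each filtration level is a subcomplex -/
  d_stable : ∀ (p : ℕ) (i j : ℤ), ∀ x ∈ F p i, C.d i j x ∈ F p j

/-- A morphism of filtered cochain complexes: a cochain map preserving the filtrations. -/
@[ext]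
structure FHom (M N : FCx R) where
  /-- the underlying cochain map -/
  φ : M.C ⟶ N.C
  /-- compatibility with the filtrations -/
  preserves : ∀ (p : ℕ) (i : ℤ), ∀ x ∈ M.F p i, φ.f i x ∈ N.F p i

/-- The category of filtered cochain complexes of `R`-modules. -/
instance : Category (FCx R) where
  Hom M N := FHom R M N
  id M := ⟨𝟙 M.C, fun p i x hx => by simpa using hx⟩
  comp f g := ⟨f.φ ≫ g.φ, fun p i x hx => by
    have h1 := f.preserves p i x hx
    have h2 := g.preserves p i _ h1
    simpa using h2⟩
  id_comp f := by apply FHom.ext; simp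
  comp_id f := by apply FHom.ext; simp
  assoc f g h := by apply FHom.ext; simp

@[simp] lemma comp_φ {M N P : FCx R} (f : M ⟶ N) (g : N ⟶ P) :
    (f ≫ g).φ = f.φ ≫ g.φ := rfl

/-- The `p`-th level `F^p M` of the filtration, as a cochain complex. -/
def FCx.level {R : Type} [CommRing R] (M : FCx R) (p : ℕ) : Cx R where
  X i := ModuleCat.of R (M.F p i)
  d i j := ModuleCat.ofHom (LinearMap.restrict (M.C.d i j).hom (fun x hx => M.d_stable p i j x hx))
  shape i j hij := by
    apply ModuleCat.hom_ext
    apply LinearMap.ext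
    intro x
    apply Subtype.ext
    show M.C.d i j x.1 = _
    rw [M.C.shape i j hij]
    rfl
  d_comp_d' i j k _ _ := by
    apply ModuleCat.hom_ext
    apply LinearMap.ext
    intro x
    apply Subtype.ext
    show M.C.d j k (M.C.d i j x.1) = _
    have h0 : M.C.d i j ≫ M.C.d j k = 0 := M.C.d_comp_d i j k
    have h1 : M.C.d j k (M.C.d i j x.1) = (M.C.d i j ≫ M.C.d j k) x.1 := rfl
    rw [h1, h0]
    rfl

/-- The restriction `F^p f : F^p M ⟶ F^p N` of a filtered morphism to the `p`-th filtration
levels. -/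
def levelMap {R : Type} [CommRing R] {M N : FCx R} (f : M ⟶ N) (p : ℕ) :
    M.level p ⟶ N.level p where
  f i := ModuleCat.ofHom (LinearMap.restrict (f.φ.f i).hom (fun x hx => f.preserves p i x hx))
  comm' i j _ := by
    apply ModuleCat.hom_ext
    apply LinearMap.ext
    intro x
    apply Subtype.ext
    show N.C.d i j (f.φ.f i x.1) = f.φ.f j (M.C.d i j x.1)
    have h : (f.φ.f i ≫ N.C.d i j) x.1 = (M.C.d i j ≫ f.φ.f j) x.1 := by
      rw [f.φ.comm i j]
    exact h

/-- A filtered morphism is a (projective) fibration if each `F^p f` is degreewise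
surjective. -/
def FFib {M N : FCx R} (f : M ⟶ N) : Prop :=
  ∀ (p : ℕ) (i : ℤ), Function.Surjective ((levelMap f p).f i)

/-- A filtered morphism is a filtered weak equivalence if each `F^p f` is a
quasi-isomorphism, i.e. `H^n (F^p f)` is an isomorphism for all `n` and `p`. -/
def FWeq {M N : FCx R} (f : M ⟶ N) : Prop :=
  ∀ p : ℕ, QuasiIso (levelMap f p)

/-- The filtered disk `D_R(n,p)`: the complex `D_R(n)` with filtration which is everything
in filtration degrees `k ≤ p` and zero above. -/
def fdisk (n : ℤ) (p : ℕ) : FCx R where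
  C := disk R n
  F k _ := if k ≤ p then ⊤ else ⊥
  antitone a b hab i := by
    by_cases hb : b ≤ p
    · have ha : a ≤ p := le_trans hab hb
      simp [ha, hb]
    · simp [hb]
  zero_top i := by simp
  d_stable k i j x hx := by
    by_cases hk : k ≤ p
    · simp [hk]
    · simp only [if_neg hk, Submodule.mem_bot] at hx ⊢
      rw [hx]
      exact map_zero _

/-- The filtered sphere `S_R(n,p)`. -/
def fsphere (n : ℤ) (p : ℕ) : FCx R where
  C := sphere R n
  F k _ := if k ≤ p then ⊤ else ⊥
  antitone a b hab i := by
    by_cases hb : b ≤ p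
    · have ha : a ≤ p := le_trans hab hb
      simp [ha, hb]
    · simp [hb]
  zero_top i := by simp
  d_stable k i j x hx := by
    by_cases hk : k ≤ p
    · simp [hk]
    · simp only [if_neg hk, Submodule.mem_bot] at hx ⊢
      rw [hx]
      exact map_zero _

/-- The filtered map `S_R(n+1,p) ⟶ D_R(n,p)`. -/
def fsphereToDisk (n : ℤ) (p : ℕ) : fsphere R (n + 1) p ⟶ fdisk R n p where
  φ := sphereToDisk R n
  preserves k i x hx := by
    by_cases hk : k ≤ p
    · have h2 : (fdisk R n p).F k i = ⊤ := if_pos hk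
      rw [h2]
      exact Submodule.mem_top
    · have h1 : (fsphere R (n + 1) p).F k i = ⊥ := if_neg hk
      have h2 : (fdisk R n p).F k i = ⊥ := if_neg hk
      rw [h1, Submodule.mem_bot] at hx
      rw [h2, Submodule.mem_bot, hx]
      exact map_zero _

/-- The zero filtered complex. -/
def fzero : FCx R where
  C := 0
  F _ _ := ⊤
  antitone _ _ _ _ := le_refl _
  zero_top _ := rfl
  d_stable _ _ _ _ _ := Submodule.mem_top

/-- The unique (zero) filtered map from the zero filtered complex. -/
def fromFZero (M : FCx R) : fzero R ⟶ M where
  φ := 0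
  preserves p i x _ := by
    have h : ((0 : (fzero R).C ⟶ M.C).f i) x = 0 := by
      rw [HomologicalComplex.zero_f]
      rfl
    rw [h]
    exact (M.F p i).zero_mem


/-- `f` is a retract of `g` in the arrow category: there are morphisms of arrows
`f → g → f` composing to the identity of `f`. -/
def IsRetractOf {C : Type 1} [Category.{0} C] {X Y X' Y' : C} (f : X ⟶ Y) (g : X' ⟶ Y') : Prop :=
  ∃ (i : Arrow.mk f ⟶ Arrow.mk g) (r : Arrow.mk g ⟶ Arrow.mk f), i ≫ r = 𝟙 (Arrow.mk f)

/-- A cochain complex `A` is cofibrant if `0 ⟶ A` has the left lifting property with respect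
to every degreewise surjective quasi-isomorphism. -/
def Cofibrant (A : Cx R) : Prop :=
  ∀ {X Y : Cx R} (p : X ⟶ Y), (∀ n : ℤ, Function.Surjective (p.f n)) → QuasiIso p →
    HasLiftingProperty (0 : (0 : Cx R) ⟶ A) p

/-- A filtered morphism is a cofibration if it has the left lifting property with respect to
every filtered trivial fibration, i.e. every filtered morphism which is in each filtration
level a degreewise surjective quasi-isomorphism. -/
def FCofib {M N : FCx R} (i : M ⟶ N) : Prop :=
  ∀ {X Y : FCx R} (p : X ⟶ Y), FFib R p → FWeq R p → HasLiftingProperty i p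

/-- A filtered complex `A` is cofibrant if `0 ⟶ A` has the left lifting property with
respect to every filtered trivial fibration. -/
def FCofibrant (A : FCx R) : Prop :=
  ∀ {X Y : FCx R} (p : X ⟶ Y), FFib R p → FWeq R p → HasLiftingProperty (fromFZero R A) p

/-! A commutative square from `S_R(n+1,k) ⟶ D_R(n,k)` to `f` is the same as a cycle `x` of
degree `n+1` in `F^k M` together with `y` of degree `n` in `F^k N` such that `f x = d y`, and a
diagonal filler is an `m` in `F^k M` with `d m = x` and `f m = y`. So the lifting properties say
that every `F^k f` lifts such relative cycles. For a map `φ` of complexes this is equivalent to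
`φ` being degreewise surjective with acyclic kernel: if `φ m₀ = y`, then `x - d m₀` is a cycle
of the kernel, and a primitive `κ` of it gives `m = m₀ + κ`. Finally, for a degreewise surjection
the long exact homology sequence of `0 ⟶ ker φ ⟶ K ⟶ L ⟶ 0` shows that `φ` is a
quasi-isomorphism if and only if `ker φ` is acyclic. -/

universe v

section KerComplex

variable {S : Type*} [Ring S] {ι : Type*} {c : ComplexShape ι}
  {K L : HomologicalComplex (ModuleCat.{v} S) c}

lemma HomologicalComplex.Hom.comm_apply (φ : K ⟶ L) (i j : ι) (x : K.X i) :
    φ.f j (K.d i j x) = L.d i j (φ.f i x) := by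
  rw [← ModuleCat.comp_apply, ← ModuleCat.comp_apply, φ.comm]

lemma HomologicalComplex.d_comp_d_apply (K : HomologicalComplex (ModuleCat.{v} S) c)
    (i j k : ι) (x : K.X i) : K.d j k (K.d i j x) = 0 := by
  rw [← ModuleCat.comp_apply, K.d_comp_d]; rfl

def kerComplex (φ : K ⟶ L) : HomologicalComplex (ModuleCat.{v} S) c where
  X i := ModuleCat.of S (LinearMap.ker (φ.f i).hom)
  d i j := ModuleCat.ofHom <| (K.d i j).hom.restrict fun x (hx : φ.f i x = 0) => by
    show φ.f j (K.d i j x) = 0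
    rw [HomologicalComplex.Hom.comm_apply, hx, map_zero]
  shape i j hij := by ext x; simp [K.shape i j hij]
  d_comp_d' i j k _ _ := by ext x; exact K.d_comp_d_apply i j k x

def kerComplexι (φ : K ⟶ L) : kerComplex φ ⟶ K where
  f i := ModuleCat.ofHom (LinearMap.ker (φ.f i).hom).subtype

lemma shortExact_kerComplex (φ : K ⟶ L) (hφ : ∀ i, Function.Surjective (φ.f i)) :
    (ShortComplex.mk (kerComplexι φ) φ (by ext i x; exact x.2)).ShortExact :=
  HomologicalComplex.shortExact_of_degreewise_shortExact _ fun i =>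
    ModuleCat.shortComplex_shortExact _
      (fun x => ⟨fun hx => ⟨⟨x, hx⟩, rfl⟩, by rintro ⟨y, rfl⟩; exact y.2⟩)
      Subtype.val_injective (hφ i)

end KerComplex

section LiftsRelativeCycles

variable {S : Type*} [Ring S] {K L : CochainComplex (ModuleCat.{v} S) ℤ}

lemma quasiIso_iff_acyclic_kerComplex (φ : K ⟶ L) (hφ : ∀ i, Function.Surjective (φ.f i)) :
    QuasiIso φ ↔ (kerComplex φ).Acyclic := by
  have hS := shortExact_kerComplex φ hφ
  refine ⟨fun hq => hS.acyclic_X₁ hq, fun hK => (quasiIso_iff φ).2 fun i => ?_⟩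
  rw [quasiIsoAt_iff_isIso_homologyMap]
  have : Mono (HomologicalComplex.homologyMap φ i) :=
    (hS.homology_exact₂ i).mono_g ((hK i).isZero_homology.eq_of_src _ _)
  have : Epi (HomologicalComplex.homologyMap φ i) :=
    (hS.homology_exact₃ i (i + 1) rfl).epi_f ((hK (i + 1)).isZero_homology.eq_of_tgt _ _)
  exact isIso_of_mono_of_epi _

lemma exactAt_iff_forall_exists_d_eq (K : CochainComplex (ModuleCat.{v} S) ℤ) {i j k : ℤ}
    (hij : i + 1 = j) (hjk : j + 1 = k) :
    K.ExactAt j ↔ ∀ x : K.X j, K.d j k x = 0 → ∃ y : K.X i, K.d i j y = x := by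
  rw [K.exactAt_iff' i j k (by simp [← hij]) (by simp [← hjk]), ShortComplex.moduleCat_exact_iff]
  rfl

def LiftsRelativeCycles (φ : K ⟶ L) (n : ℤ) : Prop :=
  ∀ (x : K.X (n + 1)) (y : L.X n), K.d (n + 1) (n + 1 + 1) x = 0 →
    φ.f (n + 1) x = L.d n (n + 1) y → ∃ m : K.X n, K.d n (n + 1) m = x ∧ φ.f n m = y

variable {φ : K ⟶ L}

lemma surjective_of_liftsRelativeCycles (h : ∀ n, LiftsRelativeCycles φ n) (i : ℤ) :
    Function.Surjective (φ.f i) := by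
  intro y
  obtain ⟨w, hw, hφw⟩ := h (i + 1) 0 (L.d i (i + 1) y) (map_zero _)
    (by rw [map_zero, L.d_comp_d_apply])
  obtain ⟨m, -, hφm⟩ := h i w y hw hφw
  exact ⟨m, hφm⟩

lemma acyclic_kerComplex_of_liftsRelativeCycles (h : ∀ n, LiftsRelativeCycles φ n) :
    (kerComplex φ).Acyclic := by
  intro j
  obtain ⟨n, rfl⟩ : ∃ n, j = n + 1 := ⟨j - 1, by omega⟩
  rw [exactAt_iff_forall_exists_d_eq _ rfl rfl]
  rintro ⟨x, hφx⟩ hx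
  obtain ⟨m, hm, hφm⟩ := h n x 0 (congrArg Subtype.val hx) (by rw [map_zero]; exact hφx)
  exact ⟨⟨m, hφm⟩, Subtype.ext hm⟩

lemma liftsRelativeCycles_of_acyclic_kerComplex (hφ : ∀ i, Function.Surjective (φ.f i))
    (hK : (kerComplex φ).Acyclic) (n : ℤ) : LiftsRelativeCycles φ n := by
  intro x y hx hxy
  obtain ⟨m₀, rfl⟩ := hφ n y
  have hker : φ.f (n + 1) (x - K.d n (n + 1) m₀) = 0 := by
    rw [map_sub, hxy, HomologicalComplex.Hom.comm_apply, sub_self]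
  have hcycle : K.d (n + 1) (n + 1 + 1) (x - K.d n (n + 1) m₀) = 0 := by
    rw [map_sub, hx, K.d_comp_d_apply, sub_zero]
  obtain ⟨⟨κ, hφκ⟩, hκ⟩ := (exactAt_iff_forall_exists_d_eq _ rfl rfl).1 (hK (n + 1))
    ⟨_, hker⟩ (Subtype.ext hcycle)
  refine ⟨m₀ + κ, ?_, by rw [map_add, hφκ, add_zero]⟩
  rw [map_add, show K.d n (n + 1) κ = x - K.d n (n + 1) m₀ from congrArg Subtype.val hκ]
  abel

lemma liftsRelativeCycles_iff :
    (∀ n, LiftsRelativeCycles φ n) ↔ (∀ i, Function.Surjective (φ.f i)) ∧ QuasiIso φ := by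
  refine ⟨fun h => ?_, fun ⟨hφ, hq⟩ => ?_⟩
  · have hφ := surjective_of_liftsRelativeCycles h
    exact ⟨hφ, (quasiIso_iff_acyclic_kerComplex φ hφ).2
      (acyclic_kerComplex_of_liftsRelativeCycles h)⟩
  · exact liftsRelativeCycles_of_acyclic_kerComplex hφ
      ((quasiIso_iff_acyclic_kerComplex φ hφ).1 hq)

end LiftsRelativeCycles

section SphereDisk

lemma LinearMap.eq_of_apply_one {A : Type*} [Semiring A] {P : Prop} {V : Type*}
    [AddCommMonoid V] [Module A V] {a b : (PLift P → A) →ₗ[A] V} (h : P → a 1 = b 1) :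
    a = b := by
  refine LinearMap.ext fun g => ?_
  by_cases hP : P
  · have hg : g = g ⟨hP⟩ • 1 := funext fun w => by simp [Subsingleton.elim w ⟨hP⟩]
    rw [hg, map_smul, map_smul, h hP]
  · rw [show g = 0 from funext fun w => absurd w.down hP, map_zero, map_zero]

variable {R} {K : Cx R} {n : ℤ}

-- Typed in the carriers of the complexes rather than in `sphereFun`/`diskFun`, so that `rw`
-- with lemmas about cochain maps applies to them.
def sphereGen (n : ℤ) : (sphere R n).X n := (1 : sphereFun R n n)

def diskGen (n : ℤ) : (disk R n).X n := (1 : diskFun R n n)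

lemma disk_d_diskGen (n : ℤ) :
    (disk R n).d n (n + 1) (diskGen n) = (1 : diskFun R n (n + 1)) :=
  funext fun _ => dif_pos ⟨rfl, rfl⟩

lemma sphereToDisk_sphereGen (n : ℤ) :
    (sphereToDisk R n).f (n + 1) (sphereGen (n + 1)) = (disk R n).d n (n + 1) (diskGen n) :=
  (funext fun _ => dif_pos rfl).trans (disk_d_diskGen n).symm

lemma diskD_eq_zero {i j : ℤ} (hi : i ≠ n) (g : diskFun R n i) : diskD R n i j g = 0 :=
  funext fun _ => dif_neg fun h => hi h.1

def sphereDescHom (x : K.X n) (i : ℤ) : sphereFun R n i →ₗ[R] K.X i :=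
  if h : i = n then (LinearMap.proj (⟨h⟩ : PLift (i = n))).smulRight ((K.XIsoOfEq h).inv x) else 0

lemma sphereDescHom_self (x : K.X n) (g : sphereFun R n n) :
    sphereDescHom x n g = g ⟨rfl⟩ • x := by
  simp [sphereDescHom]

def sphereDesc (x : K.X n) (hx : K.d n (n + 1) x = 0) : sphere R n ⟶ K where
  f i := ModuleCat.ofHom (sphereDescHom x i)
  comm' i j (hij : i + 1 = j) := by
    subst hij
    refine ModuleCat.hom_ext (LinearMap.ext fun (g : sphereFun R n i) => ?_)
    show K.d i (i + 1) (sphereDescHom x i g) = sphereDescHom x (i + 1) 0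
    rw [map_zero]
    by_cases h : i = n
    · subst h
      rw [sphereDescHom_self, map_smul, hx, smul_zero]
    · rw [sphereDescHom, dif_neg h, LinearMap.zero_apply, map_zero]

lemma sphereDesc_sphereGen (x : K.X n) (hx : K.d n (n + 1) x = 0) :
    (sphereDesc x hx).f n (sphereGen n) = x :=
  (sphereDescHom_self x 1).trans (one_smul R x)

def diskDescHom (m : K.X n) (i : ℤ) : diskFun R n i →ₗ[R] K.X i :=
  if h : i = n then
    (LinearMap.proj (⟨.inl h⟩ : PLift (i = n ∨ i = n + 1))).smulRight ((K.XIsoOfEq h).inv m)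
  else if h' : i = n + 1 then
    (LinearMap.proj (⟨.inr h'⟩ : PLift (i = n ∨ i = n + 1))).smulRight
      ((K.XIsoOfEq h').inv (K.d n (n + 1) m))
  else 0

lemma diskDescHom_self (m : K.X n) (g : diskFun R n n) :
    diskDescHom m n g = g ⟨.inl rfl⟩ • m := by
  simp [diskDescHom]

lemma diskDescHom_succ (m : K.X n) (g : diskFun R n (n + 1)) :
    diskDescHom m (n + 1) g = g ⟨.inr rfl⟩ • K.d n (n + 1) m := by
  simp [diskDescHom]

def diskDesc (m : K.X n) : disk R n ⟶ K where
  f i := ModuleCat.ofHom (diskDescHom m i)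
  comm' i j (hij : i + 1 = j) := by
    subst hij
    refine ModuleCat.hom_ext (LinearMap.ext fun (g : diskFun R n i) => ?_)
    show K.d i (i + 1) (diskDescHom m i g) = diskDescHom m (i + 1) (diskD R n i (i + 1) g)
    by_cases h : i = n
    · subst h
      rw [diskDescHom_self, diskDescHom_succ, map_smul, diskD_apply, dif_pos ⟨rfl, rfl⟩]
    · rw [diskD_eq_zero h, map_zero]
      by_cases h' : i = n + 1
      · subst h'
        rw [diskDescHom_succ, map_smul, K.d_comp_d_apply, smul_zero]
      · simp [diskDescHom, dif_neg h, dif_neg h']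

lemma diskDesc_diskGen (m : K.X n) : (diskDesc m).f n (diskGen n) = m :=
  (diskDescHom_self m 1).trans (one_smul R m)

lemma d_apply_sphereGen (α : sphere R n ⟶ K) : K.d n (n + 1) (α.f n (sphereGen n)) = 0 :=
  (HomologicalComplex.Hom.comm_apply α n (n + 1) _).symm.trans (map_zero _)

lemma sphereToDisk_comp_apply_sphereGen (α : disk R n ⟶ K) :
    (sphereToDisk R n ≫ α).f (n + 1) (sphereGen (n + 1)) = K.d n (n + 1) (α.f n (diskGen n)) := by
  rw [HomologicalComplex.comp_f, ModuleCat.comp_apply, sphereToDisk_sphereGen,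
    HomologicalComplex.Hom.comm_apply]

lemma sphere_hom_ext {α β : sphere R n ⟶ K} (h : α.f n (sphereGen n) = β.f n (sphereGen n)) :
    α = β := by
  ext i : 1
  refine ModuleCat.hom_ext (LinearMap.eq_of_apply_one fun hi => ?_)
  subst hi
  exact h

lemma disk_hom_ext {α β : disk R n ⟶ K} (h : α.f n (diskGen n) = β.f n (diskGen n)) :
    α = β := by
  have h' := congrArg (K.d n (n + 1)) h
  rw [← HomologicalComplex.Hom.comm_apply, ← HomologicalComplex.Hom.comm_apply,
    disk_d_diskGen] at h'
  ext i : 1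
  refine ModuleCat.hom_ext (LinearMap.eq_of_apply_one fun hi => ?_)
  obtain rfl | rfl := hi
  · exact h
  · exact h'

end SphereDisk

section Filtered

variable {R} {M N : FCx R} {n : ℤ} {k : ℕ}

lemma preserves_of_forall_mem {A : FCx R} (hA : ∀ p i, ¬p ≤ k → A.F p i = ⊥) (φ : A.C ⟶ M.C)
    (hφ : ∀ i x, φ.f i x ∈ M.F k i) (p : ℕ) (i : ℤ) (x : A.C.X i) (hx : x ∈ A.F p i) :
    φ.f i x ∈ M.F p i := by
  by_cases hp : p ≤ k
  · exact M.antitone p k hp i (hφ i x)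
  · rw [hA p i hp, Submodule.mem_bot] at hx
    rw [hx, map_zero]
    exact zero_mem _

def fsphereDesc (x : M.C.X n) (hx : M.C.d n (n + 1) x = 0) (hxF : x ∈ M.F k n) :
    fsphere R n k ⟶ M where
  φ := sphereDesc x hx
  preserves := preserves_of_forall_mem (fun _ _ hp => if_neg hp) _ fun i (g : sphereFun R n i) => by
    show sphereDescHom x i g ∈ M.F k i
    by_cases hi : i = n
    · subst hi
      rw [sphereDescHom_self]
      exact Submodule.smul_mem _ _ hxF
    · rw [sphereDescHom, dif_neg hi, LinearMap.zero_apply]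
      exact zero_mem _

def fdiskDesc (m : M.C.X n) (hmF : m ∈ M.F k n) : fdisk R n k ⟶ M where
  φ := diskDesc m
  preserves := preserves_of_forall_mem (fun _ _ hp => if_neg hp) _ fun i (g : diskFun R n i) => by
    show diskDescHom m i g ∈ M.F k i
    by_cases hi : i = n
    · subst hi
      rw [diskDescHom_self]
      exact Submodule.smul_mem _ _ hmF
    by_cases hi' : i = n + 1
    · subst hi'
      rw [diskDescHom_succ]
      exact Submodule.smul_mem _ _ (M.d_stable k n (n + 1) m hmF)
    · rw [diskDescHom, dif_neg hi, dif_neg hi', LinearMap.zero_apply]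
      exact zero_mem _

lemma sphereGen_mem : sphereGen n ∈ (fsphere R n k).F k n := by
  simp only [fsphere, le_refl, if_true]
  exact Submodule.mem_top

lemma diskGen_mem : diskGen n ∈ (fdisk R n k).F k n := by
  simp only [fdisk, le_refl, if_true]
  exact Submodule.mem_top


lemma hasLiftingProperty_fsphereToDisk_iff (f : M ⟶ N) (n : ℤ) (k : ℕ) :
    HasLiftingProperty (fsphereToDisk R n k) f ↔ LiftsRelativeCycles (levelMap f k) n := by
  constructor
  · intro _ ⟨x, hxF⟩ ⟨y, hyF⟩ hx hxy
    replace hx : M.C.d (n + 1) (n + 1 + 1) x = 0 := congrArg Subtype.val hx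
    replace hxy : f.φ.f (n + 1) x = N.C.d n (n + 1) y := congrArg Subtype.val hxy
    have sq : CommSq (fsphereDesc x hx hxF) (fsphereToDisk R n k) f (fdiskDesc y hyF) := ⟨by
      refine FHom.ext (sphere_hom_ext ?_)
      show f.φ.f (n + 1) ((sphereDesc x hx).f (n + 1) (sphereGen (n + 1))) =
        (sphereToDisk R n ≫ diskDesc y).f (n + 1) (sphereGen (n + 1))
      rw [sphereToDisk_comp_apply_sphereGen, sphereDesc_sphereGen, diskDesc_diskGen, hxy]⟩
    refine ⟨⟨sq.lift.φ.f n (diskGen n), sq.lift.preserves k n _ diskGen_mem⟩, Subtype.ext ?_,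
      Subtype.ext ?_⟩
    · calc M.C.d n (n + 1) (sq.lift.φ.f n (diskGen n))
          = (fsphereToDisk R n k ≫ sq.lift).φ.f (n + 1) (sphereGen (n + 1)) :=
            (sphereToDisk_comp_apply_sphereGen sq.lift.φ).symm
        _ = (fsphereDesc x hx hxF).φ.f (n + 1) (sphereGen (n + 1)) := by rw [sq.fac_left]
        _ = x := sphereDesc_sphereGen x hx
    · calc f.φ.f n (sq.lift.φ.f n (diskGen n)) = (sq.lift ≫ f).φ.f n (diskGen n) := rfl
        _ = (fdiskDesc y hyF).φ.f n (diskGen n) := by rw [sq.fac_right]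
        _ = y := diskDesc_diskGen y
  · intro h
    refine ⟨fun {u v} sq => ?_⟩
    have hxy : f.φ.f (n + 1) (u.φ.f (n + 1) (sphereGen (n + 1))) =
        N.C.d n (n + 1) (v.φ.f n (diskGen n)) :=
      calc f.φ.f (n + 1) (u.φ.f (n + 1) (sphereGen (n + 1)))
          = (u ≫ f).φ.f (n + 1) (sphereGen (n + 1)) := rfl
        _ = (fsphereToDisk R n k ≫ v).φ.f (n + 1) (sphereGen (n + 1)) := by rw [sq.w]
        _ = N.C.d n (n + 1) (v.φ.f n (diskGen n)) := sphereToDisk_comp_apply_sphereGen v.φ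
    obtain ⟨⟨m, hmF⟩, hm, hfm⟩ := h ⟨_, u.preserves k _ _ sphereGen_mem⟩
      ⟨_, v.preserves k n _ diskGen_mem⟩ (Subtype.ext (d_apply_sphereGen u.φ)) (Subtype.ext hxy)
    replace hm : M.C.d n (n + 1) m = u.φ.f (n + 1) (sphereGen (n + 1)) := congrArg Subtype.val hm
    replace hfm : f.φ.f n m = v.φ.f n (diskGen n) := congrArg Subtype.val hfm
    refine ⟨⟨⟨fdiskDesc m hmF, FHom.ext (sphere_hom_ext ?_), FHom.ext (disk_hom_ext ?_)⟩⟩⟩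
    · show (sphereToDisk R n ≫ diskDesc m).f (n + 1) (sphereGen (n + 1)) = _
      rw [sphereToDisk_comp_apply_sphereGen, diskDesc_diskGen]
      exact hm
    · show f.φ.f n ((diskDesc m).f n (diskGen n)) = _
      rw [diskDesc_diskGen]
      exact hfm

end Filtered

theorem statement_10 {M N : FCx R} (f : M ⟶ N) :
    (∀ (n : ℤ) (k : ℕ), HasLiftingProperty (fsphereToDisk R n k) f) ↔
      ∀ k : ℕ, (∀ i : ℤ, Function.Surjective ((levelMap f k).f i)) ∧
        QuasiIso (levelMap f k) := by
  simp only [hasLiftingProperty_fsphereToDisk_iff, ← liftsRelativeCycles_iff]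
  exact forall_comm

end
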